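/- There exists c₀ > 0 and a constant such that for all 0 < c < 1 and all w in the exterior disc Δ with |w − e^{iβ}| ≤ β/2, the slit map f_c satisfies |f_c(w) − 1| = 2(e^c − 1)^{1/4}·|w − e^{iβ}|^{1/2}·(1 + O( (|w − e^{iβ}|/c^{1/2}) ∨ (c^{1/4}|w − e^{iβ}|^{1/2}) )). -/

import Mathlib

open Complex Real

/-- Möbius map from the exterior disc to the upper half-plane. -/
noncomputable def mHalf (w : ℂ) : ℂ := Complex.I * (w - 1) / (w + 1)

/-- Möbius map from the upper half-plane to the exterior disc. -/
noncomputable def mDisc (z : ℂ) : ℂ := (1 - Complex.I * z) / (1 + Complex.I * z)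

/-- The argument of a complex number taken in `(0, 2π)` (for `w ∉ [0,∞)`). -/
noncomputable def argPos (w : ℂ) : ℝ :=
  if Complex.arg w ≤ 0 then Complex.arg w + 2 * π else Complex.arg w

/-- The branch of the square root with `arg : ℂ \ [0,∞) → (0, 2π)`. -/
noncomputable def sqrtBranch (w : ℂ) : ℂ :=
  (Real.sqrt ‖w‖ : ℂ) * Complex.exp (Complex.I * ((argPos w / 2 : ℝ) : ℂ))

/-- The half-plane slit map `f̃_c(ζ) = e^{-c/2}·√(ζ² − (e^c − 1))`. -/
noncomputable def halfPlaneSlit (c : ℝ) (ζ : ℂ) : ℂ :=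
  (Real.exp (-c / 2) : ℂ) * sqrtBranch (ζ ^ 2 - ((Real.exp c - 1 : ℝ) : ℂ))

/-- The exterior unit-disc slit map `f_c = m_Δ ∘ f̃_c ∘ m_ℍ`. -/
noncomputable def slitMap (c : ℝ) (w : ℂ) : ℂ := mDisc (halfPlaneSlit c (mHalf w))

/-- The base-point preimage `e^{iβ(c)} = 2e^{-c} − 1 + 2i·e^{-c}·√(e^c − 1)`. -/
noncomputable def basePt (c : ℝ) : ℂ :=
  ((2 * Real.exp (-c) - 1 : ℝ) : ℂ) +
    ((2 * Real.exp (-c) * Real.sqrt (Real.exp c - 1) : ℝ) : ℂ) * Complex.I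

/-- The base-point angle `β(c) ∈ (0, π)`. -/
noncomputable def βangle (c : ℝ) : ℝ := Complex.arg (basePt c)

/-! The Möbius map `mHalf` sends `e^{iβ}` to `-√(e^c - 1)`, a branch point of `f̃_c`, so with
`ζ = mHalf w`, `a = e^c - 1` and `r = |w - e^{iβ}|`,
`|f̃_c(ζ)|² = e^{-c} |ζ - √a| |ζ + √a|` where `|ζ + √a| = 2r / (|w + 1| |e^{iβ} + 1|)`
and `|e^{iβ} + 1|² = 4e^{-c}`. Replacing `|ζ - √a|` by `2√a` and `|w + 1|` by `|e^{iβ} + 1|`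
costs relative errors `O(r/√c)` and `O(r)`, so `|f̃_c(ζ)| = a^{1/4} r^{1/2} (1 + O(r/√c))`.
Then `|m_Δ(z) - 1| = 2|z| / |1 + iz|` with `|1 + iz| = 1 + O(|z|)`, and `|z| = O(c^{1/4} r^{1/2})`.
Finally `r ≤ β/2` gives `r = O(√c)`, since `β = O(√c)` by Jordan's inequality. -/

lemma abs_sub_one_le_of_sq_eq_mul {ρ x y : ℝ} (hρ : 0 ≤ ρ) (h : ρ ^ 2 = x * y) :
    |ρ - 1| ≤ |x - 1| + |y - 1| + |x - 1| * |y - 1| :=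
  calc |ρ - 1| ≤ |ρ - 1| * |ρ + 1| :=
        le_mul_of_one_le_right (abs_nonneg _) (by rw [abs_of_nonneg (by linarith)]; linarith)
    _ = |(x - 1) + (y - 1) + (x - 1) * (y - 1)| := by
        rw [← abs_mul]; congr 1; linear_combination h
    _ ≤ |x - 1| + |y - 1| + |x - 1| * |y - 1| := by
        grw [abs_add_le, abs_add_le, abs_mul]

lemma abs_div_sub_one_le {x y : ℝ} (hy : 1 / 2 ≤ y) : |x / y - 1| ≤ 2 * (|x - 1| + |y - 1|) := by
  have hy₀ : 0 < y := by linarith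
  have htri : |x - y| ≤ |x - 1| + |y - 1| := by
    rw [← abs_sub_comm 1 y]; exact abs_sub_le x 1 y
  rw [div_sub_one hy₀.ne', abs_div, abs_of_pos hy₀, div_le_iff₀ hy₀]
  nlinarith [abs_nonneg (x - 1), abs_nonneg (y - 1)]

lemma sq_rpow_quarter_mul_rpow_half {x y : ℝ} (hx : 0 ≤ x) (hy : 0 ≤ y) :
    (x ^ ((1:ℝ)/4) * y ^ ((1:ℝ)/2)) ^ 2 = √x * y := by
  rw [mul_pow, ← Real.rpow_natCast, ← Real.rpow_natCast (y ^ _), ← Real.rpow_mul hx,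
    ← Real.rpow_mul hy, Real.sqrt_eq_rpow]
  norm_num

lemma exp_neg_mul_exp (c : ℝ) : Real.exp (-c) * Real.exp c = 1 := by
  rw [← Real.exp_add]; simp

lemma sq_sqrt_exp_sub_one {c : ℝ} (hc : 0 ≤ c) : √(Real.exp c - 1) ^ 2 = Real.exp c - 1 :=
  Real.sq_sqrt (by linarith [Real.add_one_le_exp c])

lemma exp_sub_one_le_two_mul {c : ℝ} (hc : 0 ≤ c) (hc' : c ≤ 1) : Real.exp c - 1 ≤ 2 * c := by
  simpa [abs_of_nonneg hc] using
    le_of_abs_le (Real.abs_exp_sub_one_le (x := c) (by rwa [abs_of_nonneg hc]))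

lemma rpow_quarter_exp_sub_one_le {c : ℝ} (hc : 0 ≤ c) (hc' : c ≤ 1) :
    (Real.exp c - 1) ^ ((1:ℝ)/4) ≤ 2 * c ^ ((1:ℝ)/4) := by
  have h2 : (2:ℝ) ^ ((1:ℝ)/4) ≤ 2 := by
    simpa using Real.rpow_le_rpow_of_exponent_le one_le_two (by norm_num : (1:ℝ)/4 ≤ 1)
  calc (Real.exp c - 1) ^ ((1:ℝ)/4) ≤ (2 * c) ^ ((1:ℝ)/4) :=
        Real.rpow_le_rpow (by linarith [Real.add_one_le_exp c]) (exp_sub_one_le_two_mul hc hc')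
          (by norm_num)
    _ = 2 ^ ((1:ℝ)/4) * c ^ ((1:ℝ)/4) := Real.mul_rpow zero_le_two hc
    _ ≤ 2 * c ^ ((1:ℝ)/4) := by gcongr

lemma norm_sqrtBranch (u : ℂ) : ‖sqrtBranch u‖ = √‖u‖ := by
  rw [sqrtBranch, norm_mul, Complex.norm_real, Real.norm_eq_abs, Complex.norm_exp]
  simp [Real.sqrt_nonneg, _root_.abs_of_nonneg]

lemma sq_norm_halfPlaneSlit (c : ℝ) (ζ : ℂ) :
    ‖halfPlaneSlit c ζ‖ ^ 2 = Real.exp (-c) * ‖ζ ^ 2 - ((Real.exp c - 1 : ℝ) : ℂ)‖ := by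
  rw [halfPlaneSlit, norm_mul, norm_sqrtBranch, mul_pow, Real.sq_sqrt (norm_nonneg _),
    Complex.norm_real, Real.norm_eq_abs, abs_of_pos (Real.exp_pos _), ← Real.exp_nat_mul]
  norm_num [mul_div_cancel₀]

lemma norm_mDisc_sub_one {z : ℂ} (hz : ‖z‖ < 1) : ‖mDisc z - 1‖ = 2 * ‖z‖ / ‖1 + I * z‖ := by
  have hden : 1 + I * z ≠ 0 := by
    intro h
    have : ‖I * z‖ = 1 := by rw [eq_neg_of_add_eq_zero_right h, norm_neg, norm_one]
    simp at this
    linarith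
  have : mDisc z - 1 = -(2 * I * z) / (1 + I * z) := by
    rw [mDisc]
    field_simp
    ring
  simp [this]

lemma mHalf_sub_mHalf {w w' : ℂ} (hw : w + 1 ≠ 0) (hw' : w' + 1 ≠ 0) :
    mHalf w - mHalf w' = 2 * I * (w - w') / ((w + 1) * (w' + 1)) := by
  rw [mHalf, mHalf]
  field_simp
  ring

section basePt

variable {c : ℝ}

lemma basePt_re (c : ℝ) : (basePt c).re = 2 * Real.exp (-c) - 1 := by
  simp only [basePt, Complex.add_re, Complex.ofReal_re, Complex.mul_re, Complex.I_re,
    Complex.ofReal_im, Complex.I_im]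
  ring

lemma basePt_im (c : ℝ) :
    (basePt c).im = 2 * Real.exp (-c) * √(Real.exp c - 1) := by
  simp only [basePt, Complex.add_im, Complex.ofReal_re, Complex.mul_im, Complex.I_re,
    Complex.ofReal_im, Complex.I_im]
  ring

lemma norm_basePt (hc : 0 ≤ c) : ‖basePt c‖ = 1 := by
  rw [← pow_eq_one_iff_of_nonneg (norm_nonneg _) two_ne_zero, Complex.sq_norm,
    Complex.normSq_apply, basePt_re, basePt_im]
  linear_combination (4 * Real.exp (-c) ^ 2) * sq_sqrt_exp_sub_one hc
    + 4 * Real.exp (-c) * exp_neg_mul_exp c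

lemma sq_norm_basePt_add_one (hc : 0 ≤ c) : ‖basePt c + 1‖ ^ 2 = 4 * Real.exp (-c) := by
  rw [Complex.sq_norm, Complex.normSq_apply, Complex.add_re, Complex.add_im, basePt_re,
    basePt_im]
  simp only [Complex.one_re, Complex.one_im]
  linear_combination (4 * Real.exp (-c) ^ 2) * sq_sqrt_exp_sub_one hc
    + 4 * Real.exp (-c) * exp_neg_mul_exp c

lemma basePt_add_one_ne_zero (hc : 0 ≤ c) : basePt c + 1 ≠ 0 := by
  intro h
  have := sq_norm_basePt_add_one hc
  rw [h, norm_zero] at this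
  linarith [Real.exp_pos (-c)]

lemma mHalf_basePt (hc : 0 ≤ c) : mHalf (basePt c) = -((√(Real.exp c - 1) : ℝ) : ℂ) := by
  rw [mHalf, div_eq_iff (basePt_add_one_ne_zero hc)]
  apply Complex.ext <;>
    simp only [Complex.mul_re, Complex.mul_im, Complex.sub_re, Complex.sub_im, Complex.add_re,
      Complex.add_im, Complex.neg_re, Complex.neg_im, Complex.ofReal_re, Complex.ofReal_im,
      Complex.I_re, Complex.I_im, Complex.one_re, Complex.one_im, basePt_re, basePt_im]
  · ring
  · linear_combination (2 * Real.exp (-c)) * sq_sqrt_exp_sub_one hc + 2 * exp_neg_mul_exp c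

lemma βangle_le_six_mul_sqrt (hc : 0 ≤ c) (hc' : c ≤ 1 / 2) : βangle c ≤ 6 * √c := by
  have hE : 1 / 2 ≤ Real.exp (-c) := by linarith [Real.one_sub_le_exp_neg c]
  have hE1 : Real.exp (-c) ≤ 1 := Real.exp_le_one_iff.mpr (by linarith)
  have hβ₀ : 0 ≤ βangle c := by
    rw [βangle, Complex.arg_nonneg_iff, basePt_im]; positivity
  have hβπ : βangle c ≤ π / 2 :=
    (abs_le.mp (Complex.abs_arg_le_pi_div_two_iff.mpr (by rw [basePt_re]; linarith))).2
  have hsin : Real.sin (βangle c) = 2 * Real.exp (-c) * √(Real.exp c - 1) := by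
    rw [βangle, Complex.sin_arg, norm_basePt hc, div_one, basePt_im]
  have hJordan := Real.mul_le_sin hβ₀ hβπ
  rw [hsin] at hJordan
  have hsa : √(Real.exp c - 1) ≤ √2 * √c := by
    rw [← Real.sqrt_mul zero_le_two]
    exact Real.sqrt_le_sqrt (exp_sub_one_le_two_mul hc (by linarith))
  rw [div_mul_eq_mul_div, div_le_iff₀ Real.pi_pos] at hJordan
  calc βangle c ≤ π * (Real.exp (-c) * √(Real.exp c - 1)) := by linarith
    _ ≤ π * (1 * (√2 * √c)) := by gcongr
    _ ≤ 6 * √c := by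
      have hsqrt2 : √2 < 3 / 2 := by rw [Real.sqrt_lt' (by norm_num)]; norm_num
      have h : π * √2 ≤ 6 := by nlinarith [Real.pi_lt_d2, Real.pi_pos, Real.sqrt_nonneg 2]
      nlinarith [mul_le_mul_of_nonneg_right h (Real.sqrt_nonneg c)]

lemma norm_sub_basePt_pos {w : ℂ} (hc : 0 ≤ c) (hw : 1 < ‖w‖) : 0 < ‖w - basePt c‖ := by
  linarith [norm_sub_norm_le w (basePt c), norm_basePt hc]

lemma three_halves_le_norm_basePt_add_one (hc : 0 ≤ c) (hc' : c ≤ 1 / 4) :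
    3 / 2 ≤ ‖basePt c + 1‖ := by
  have h := sq_norm_basePt_add_one hc
  nlinarith [Real.one_sub_le_exp_neg c, norm_nonneg (basePt c + 1)]

end basePt

lemma norm_mHalf_add_sqrt_exp_sub_one {c : ℝ} {w : ℂ} (hc : 0 ≤ c) (hw : w + 1 ≠ 0) :
    ‖mHalf w + ((√(Real.exp c - 1) : ℝ) : ℂ)‖
      = 2 * ‖w - basePt c‖ / (‖w + 1‖ * ‖basePt c + 1‖) := by
  rw [← sub_neg_eq_add, ← mHalf_basePt hc, mHalf_sub_mHalf hw (basePt_add_one_ne_zero hc)]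
  simp

lemma sq_norm_halfPlaneSlit_mHalf {c : ℝ} {w : ℂ} (hc : 0 ≤ c) (hw : w + 1 ≠ 0) :
    ‖halfPlaneSlit c (mHalf w)‖ ^ 2
      = ‖mHalf w - ((√(Real.exp c - 1) : ℝ) : ℂ)‖ * ‖w - basePt c‖ * ‖basePt c + 1‖
          / (2 * ‖w + 1‖) := by
  set s : ℂ := ((√(Real.exp c - 1) : ℝ) : ℂ)
  have hfactor : mHalf w ^ 2 - ((Real.exp c - 1 : ℝ) : ℂ) = (mHalf w - s) * (mHalf w + s) := by
    rw [← sq_sqrt_exp_sub_one hc]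
    push_cast
    ring
  have hv : 0 < ‖basePt c + 1‖ := norm_pos_iff.mpr (basePt_add_one_ne_zero hc)
  have hu : 0 < ‖w + 1‖ := norm_pos_iff.mpr hw
  have hE : Real.exp (-c) = ‖basePt c + 1‖ ^ 2 / 4 := by
    rw [sq_norm_basePt_add_one hc]; ring
  rw [sq_norm_halfPlaneSlit, hfactor, norm_mul, norm_mHalf_add_sqrt_exp_sub_one hc hw, hE]
  field_simp
  ring

lemma abs_norm_mHalf_sub_sqrt_sub_le {c : ℝ} {w : ℂ} (hc : 0 ≤ c) (hw : w + 1 ≠ 0)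
    (huv : 1 ≤ ‖w + 1‖ * ‖basePt c + 1‖) :
    |‖mHalf w - ((√(Real.exp c - 1) : ℝ) : ℂ)‖ - 2 * √(Real.exp c - 1)|
      ≤ 2 * ‖w - basePt c‖ := by
  set sa := √(Real.exp c - 1)
  have hq : ‖mHalf w + (sa : ℂ)‖ ≤ 2 * ‖w - basePt c‖ := by
    rw [norm_mHalf_add_sqrt_exp_sub_one hc hw]
    exact div_le_of_le_mul₀ (by positivity) (by positivity)
      (le_mul_of_one_le_right (by positivity) huv)
  have h := abs_norm_sub_norm_le (mHalf w - (sa : ℂ)) (-(2 * (sa : ℂ)))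
  rw [show mHalf w - (sa : ℂ) - -(2 * (sa : ℂ)) = mHalf w + sa by ring] at h
  have hsa : 0 ≤ sa := Real.sqrt_nonneg _
  simp only [norm_neg, norm_mul, Complex.norm_ofNat, Complex.norm_real, Real.norm_eq_abs,
    abs_of_nonneg hsa] at h
  linarith

lemma sq_norm_halfPlaneSlit_mHalf_div {c : ℝ} {w : ℂ} (hc : 0 < c) (hw : w + 1 ≠ 0)
    (hr : 0 < ‖w - basePt c‖) :
    (‖halfPlaneSlit c (mHalf w)‖ /
        ((Real.exp c - 1) ^ ((1:ℝ)/4) * ‖w - basePt c‖ ^ ((1:ℝ)/2))) ^ 2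
      = ‖mHalf w - ((√(Real.exp c - 1) : ℝ) : ℂ)‖ / (2 * √(Real.exp c - 1))
          * (‖basePt c + 1‖ / ‖w + 1‖) := by
  have ha : 0 < Real.exp c - 1 := by linarith [Real.add_one_le_exp c]
  have hsa : 0 < √(Real.exp c - 1) := Real.sqrt_pos.mpr ha
  have hu : 0 < ‖w + 1‖ := norm_pos_iff.mpr hw
  rw [div_pow, sq_norm_halfPlaneSlit_mHalf hc.le hw, sq_rpow_quarter_mul_rpow_half ha.le hr.le]
  field_simp

lemma abs_norm_halfPlaneSlit_div_sub_one_le {c : ℝ} {w : ℂ} (hc : 0 < c) (hc' : c ≤ 1 / 100)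
    (hr₀ : 0 < ‖w - basePt c‖) (hr : ‖w - basePt c‖ ≤ 3 * √c) :
    |‖halfPlaneSlit c (mHalf w)‖ /
        ((Real.exp c - 1) ^ ((1:ℝ)/4) * ‖w - basePt c‖ ^ ((1:ℝ)/2)) - 1|
      ≤ 3 * (‖w - basePt c‖ / √c) := by
  set r := ‖w - basePt c‖
  set sa := √(Real.exp c - 1)
  have hsa : 0 < sa := Real.sqrt_pos.mpr (by linarith [Real.add_one_le_exp c])
  have hsc₀ : 0 < √c := Real.sqrt_pos.mpr hc
  have hsc : √c ≤ sa := Real.sqrt_le_sqrt (by linarith [Real.add_one_le_exp c])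
  have hsc₁ : √c ≤ 1 / 10 := Real.sqrt_le_iff.mpr ⟨by norm_num, by linarith⟩
  have hv := three_halves_le_norm_basePt_add_one hc.le (by linarith)
  have huv : |‖w + 1‖ - ‖basePt c + 1‖| ≤ r := by
    simpa using abs_norm_sub_norm_le (w + 1) (basePt c + 1)
  have hu : 1 ≤ ‖w + 1‖ := by linarith [(abs_le.mp huv).1]
  have hu₀ : 0 < ‖w + 1‖ := by linarith
  have hw : w + 1 ≠ 0 := norm_pos_iff.mp hu₀
  have hp := abs_norm_mHalf_sub_sqrt_sub_le hc.le hw (by nlinarith)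
  have hx : |‖mHalf w - (sa : ℂ)‖ / (2 * sa) - 1| ≤ r / √c := by
    have h2sa : 0 < 2 * sa := by positivity
    rw [div_sub_one h2sa.ne', abs_div, abs_of_pos h2sa, div_le_div_iff₀ h2sa hsc₀]
    nlinarith [mul_le_mul hp hsc hsc₀.le (by positivity)]
  have hy : |‖basePt c + 1‖ / ‖w + 1‖ - 1| ≤ r := by
    rw [div_sub_one hu₀.ne', abs_div, abs_of_pos hu₀, abs_sub_comm, div_le_iff₀ hu₀]
    nlinarith
  have hrt : r ≤ r / √c := le_div_self hr₀.le hsc₀ (by linarith)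
  have hr₁ : r ≤ 1 := by linarith
  have hA : 0 ≤ (Real.exp c - 1) ^ ((1:ℝ)/4) * r ^ ((1:ℝ)/2) :=
    mul_nonneg (Real.rpow_nonneg (by linarith [Real.add_one_le_exp c]) _)
      (Real.rpow_nonneg hr₀.le _)
  refine (abs_sub_one_le_of_sq_eq_mul (div_nonneg (norm_nonneg _) hA)
    (sq_norm_halfPlaneSlit_mHalf_div hc hw hr₀)).trans ?_
  nlinarith [abs_nonneg (‖mHalf w - (sa : ℂ)‖ / (2 * sa) - 1),
    abs_nonneg (‖basePt c + 1‖ / ‖w + 1‖ - 1)]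

lemma norm_halfPlaneSlit_mHalf_le {c : ℝ} {w : ℂ} (hc : 0 < c) (hc' : c ≤ 1 / 100)
    (hr₀ : 0 < ‖w - basePt c‖) (hr : ‖w - basePt c‖ ≤ 3 * √c) :
    ‖halfPlaneSlit c (mHalf w)‖ ≤ 20 * (c ^ ((1:ℝ)/4) * ‖w - basePt c‖ ^ ((1:ℝ)/2)) := by
  have hρ := (abs_le.mp (abs_norm_halfPlaneSlit_div_sub_one_le hc hc' hr₀ hr)).2
  have hA := mul_le_mul_of_nonneg_right (rpow_quarter_exp_sub_one_le hc.le (by linarith))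
    (Real.rpow_nonneg hr₀.le ((1:ℝ)/2))
  have ht : ‖w - basePt c‖ / √c ≤ 3 := div_le_of_le_mul₀ (Real.sqrt_nonneg c) (by norm_num) hr
  have hA₀ : 0 < (Real.exp c - 1) ^ ((1:ℝ)/4) * ‖w - basePt c‖ ^ ((1:ℝ)/2) :=
    mul_pos (Real.rpow_pos_of_pos (by linarith [Real.add_one_le_exp c]) _)
      (Real.rpow_pos_of_pos hr₀ _)
  rw [div_sub_one hA₀.ne', div_le_iff₀ hA₀] at hρ
  nlinarith [div_nonneg hr₀.le (Real.sqrt_nonneg c)]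

lemma rpow_quarter_mul_rpow_half_le_two_mul_sqrt {c r : ℝ} (hc : 0 ≤ c) (hr₀ : 0 ≤ r)
    (hr : r ≤ 3 * √c) : c ^ ((1:ℝ)/4) * r ^ ((1:ℝ)/2) ≤ 2 * √c := by
  have hs := sq_rpow_quarter_mul_rpow_half hc hr₀
  have : 0 ≤ c ^ ((1:ℝ)/4) * r ^ ((1:ℝ)/2) := by positivity
  nlinarith [Real.mul_self_sqrt hc, Real.sqrt_nonneg c]

/-- For `w ∈ Δ` with `|w − e^{iβ}| ≤ β/2`,
`|f_c(w) − 1| = 2(e^c − 1)^{1/4}·|w − e^{iβ}|^{1/2}·(1 + O((|w−e^{iβ}|/c^{1/2}) ∨ c^{1/4}|w−e^{iβ}|^{1/2}))`. -/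
theorem slitMap_distance_estimate :
    ∃ c₀ > (0:ℝ), ∃ C > (0:ℝ), ∀ c : ℝ, 0 < c → c < 1 → c < c₀ →
      ∀ w : ℂ, 1 < ‖w‖ → ‖w - basePt c‖ ≤ βangle c / 2 →
        ∃ e : ℝ,
          |e| ≤ C * max (‖w - basePt c‖ / Real.sqrt c)
              (c ^ ((1:ℝ)/4) * ‖w - basePt c‖ ^ ((1:ℝ)/2)) ∧
          ‖slitMap c w - 1‖
            = 2 * (Real.exp c - 1) ^ ((1:ℝ)/4) *
                ‖w - basePt c‖ ^ ((1:ℝ)/2) * (1 + e) := by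
  refine ⟨1 / 10000, by norm_num, 50, by norm_num, fun c hc _ hc₀ w hw hwβ => ?_⟩
  have hr₀ := norm_sub_basePt_pos hc.le hw
  have hr : ‖w - basePt c‖ ≤ 3 * √c := by linarith [βangle_le_six_mul_sqrt hc.le (by linarith)]
  have hρ := abs_norm_halfPlaneSlit_div_sub_one_le hc (by linarith) hr₀ hr
  have hz := norm_halfPlaneSlit_mHalf_le hc (by linarith) hr₀ hr
  have hs := rpow_quarter_mul_rpow_half_le_two_mul_sqrt hc.le hr₀.le hr
  have hsc : √c ≤ 1 / 100 := Real.sqrt_le_iff.mpr ⟨by norm_num, by linarith⟩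
  have hsc₀ : 0 < √c := Real.sqrt_pos.mpr hc
  have hA₀ : 0 < (Real.exp c - 1) ^ ((1:ℝ)/4) * ‖w - basePt c‖ ^ ((1:ℝ)/2) :=
    mul_pos (Real.rpow_pos_of_pos (by linarith [Real.add_one_le_exp c]) _)
      (Real.rpow_pos_of_pos hr₀ _)
  -- makes `A` a subterm of the goal, so that `set` abstracts it
  rw [mul_assoc 2]
  set r := ‖w - basePt c‖
  set s := c ^ ((1:ℝ)/4) * r ^ ((1:ℝ)/2)
  set A := (Real.exp c - 1) ^ ((1:ℝ)/4) * r ^ ((1:ℝ)/2)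
  set z := halfPlaneSlit c (mHalf w)
  have hN : |‖1 + I * z‖ - 1| ≤ ‖z‖ := by simpa using abs_norm_sub_norm_le (1 + I * z) 1
  refine ⟨‖z‖ / A / ‖1 + I * z‖ - 1, ?_, ?_⟩
  · calc _ ≤ 2 * (|‖z‖ / A - 1| + |‖1 + I * z‖ - 1|) :=
          abs_div_sub_one_le (by linarith [(abs_le.mp hN).1])
      _ ≤ 2 * (3 * (r / √c) + 20 * s) := by gcongr; linarith
      _ ≤ 50 * max (r / √c) s := by
        linarith [le_max_left (r / √c) s, le_max_right (r / √c) s, div_nonneg hr₀.le hsc₀.le]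
  · rw [show slitMap c w = mDisc z from rfl, norm_mDisc_sub_one (by linarith)]
    field_simp
    ring
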